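/- Let A be an invertible N×N real matrix and let D = diag(Σ_j |a_{1j}|, …, Σ_j |a_{Nj}|) be the row-equilibration scaling. Then row equilibration minimizes the ℓ^∞ condition number over all row scalings: for every invertible diagonal N×N real matrix E, κ_∞(D⁻¹A) ≤ κ_∞(E⁻¹A), where κ_∞(B) = ‖B‖_∞ · ‖B⁻¹‖_∞. -/
import Mathlib


/- The matrix norm here is the operator norm induced by the `ℓ^∞` (max) vector norm,
i.e. the maximum absolute row sum; `κ_∞(B) = ‖B‖_∞ * ‖B⁻¹‖_∞`. -/
attribute [local instance] Matrix.linftyOpNormedAddCommGroup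

/-- **Row equilibration minimizes the `ℓ^∞` condition number over row scalings.** Let `A` be an
invertible `N×N` real matrix and `D = diag(∑_j |a_{1j}|, …, ∑_j |a_{Nj}|)` the row-equilibration
scaling. Then for every invertible diagonal `N×N` real matrix `E`,
`κ_∞(D⁻¹A) ≤ κ_∞(E⁻¹A)`, where `κ_∞(B) = ‖B‖_∞ * ‖B⁻¹‖_∞`. -/
theorem row_equilibration_minimizes_linfty_condition_number {N : ℕ}
    (A : Matrix (Fin N) (Fin N) ℝ) (hA : IsUnit A)
    (D : Matrix (Fin N) (Fin N) ℝ)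
    (hD : D = Matrix.diagonal fun i => ∑ j, |A i j|)
    (E : Matrix (Fin N) (Fin N) ℝ) (hEdiag : E.IsDiag) (hE : IsUnit E) :
    ‖D⁻¹ * A‖ * ‖(D⁻¹ * A)⁻¹‖ ≤ ‖E⁻¹ * A‖ * ‖(E⁻¹ * A)⁻¹‖ := by
  classical
  rcases Nat.eq_zero_or_pos N with hN | hN
  · subst hN
    have h0 : ‖D⁻¹ * A‖ = 0 := by
      rw [Matrix.linfty_opNorm_def]
      simp
    rw [h0, zero_mul]
    exact mul_nonneg (norm_nonneg _) (norm_nonneg _)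
  have hne : Nonempty (Fin N) := ⟨⟨0, hN⟩⟩
  set d : Fin N → ℝ := fun i => ∑ j, |A i j| with hd
  have hdet : A.det ≠ 0 := by
    have := (Matrix.isUnit_iff_isUnit_det A).mp hA
    simpa [isUnit_iff_ne_zero] using this
  have hdpos : ∀ i, 0 < d i := by
    intro i
    rcases (Finset.sum_nonneg fun j _ => abs_nonneg (A i j)).lt_or_eq with h | h
    · exact h
    · exfalso
      apply hdet
      refine Matrix.det_eq_zero_of_row_eq_zero i fun j => ?_
      have := (Finset.sum_eq_zero_iff_of_nonneg (fun j _ => abs_nonneg (A i j))).mp h.symm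
      simpa using this j (Finset.mem_univ j)
  have hdne : ∀ i, d i ≠ 0 := fun i => (hdpos i).ne'
  have hDdet : IsUnit D.det := by
    rw [hD, Matrix.det_diagonal, isUnit_iff_ne_zero]
    exact Finset.prod_ne_zero_iff.mpr fun i _ => hdne i
  set e : Fin N → ℝ := E.diag with he
  have hEe : E = Matrix.diagonal e := (hEdiag.diagonal_diag).symm
  have hEdet : IsUnit E.det := (Matrix.isUnit_iff_isUnit_det E).mp hE
  have hene : ∀ i, e i ≠ 0 := by
    intro i hi
    rw [isUnit_iff_ne_zero] at hEdet
    apply hEdet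
    rw [hEe, Matrix.det_diagonal]
    exact Finset.prod_eq_zero (Finset.mem_univ i) hi
  have hDinv : D⁻¹ = Matrix.diagonal fun i => (d i)⁻¹ := by
    apply Matrix.inv_eq_right_inv
    rw [hD, Matrix.diagonal_mul_diagonal]
    convert Matrix.diagonal_one with i
    exact mul_inv_cancel₀ (hdne i)
  have hEinv : E⁻¹ = Matrix.diagonal fun i => (e i)⁻¹ := by
    apply Matrix.inv_eq_right_inv
    rw [hEe, Matrix.diagonal_mul_diagonal]
    convert Matrix.diagonal_one with i
    exact mul_inv_cancel₀ (hene i)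
  have hnorm1 : ‖D⁻¹ * A‖ = 1 := by
    rw [Matrix.linfty_opNorm_def]
    have hrow : ∀ i : Fin N, (∑ j, ‖(D⁻¹ * A) i j‖₊) = 1 := by
      intro i
      apply NNReal.coe_injective
      push_cast
      rw [hDinv]
      simp only [Matrix.diagonal_mul, Real.norm_eq_abs, abs_mul, ← Finset.mul_sum]
      rw [show (∑ x, |A i x|) = d i from rfl,
        abs_of_nonneg (inv_nonneg.mpr (hdpos i).le)]
      exact inv_mul_cancel₀ (hdne i)
    simp_rw [hrow]
    rw [Finset.sup_const Finset.univ_nonempty 1]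
    norm_num
  have hnorm2 : ‖E⁻¹ * D‖ = ‖E⁻¹ * A‖ := by
    rw [Matrix.linfty_opNorm_def, Matrix.linfty_opNorm_def]
    congr 1
    apply Finset.sup_congr rfl
    intro i _
    apply NNReal.coe_injective
    push_cast
    rw [hEinv, hD, Matrix.diagonal_mul_diagonal]
    have hL : (∑ x, ‖Matrix.diagonal (fun i => (e i)⁻¹ * d i) i x‖) = |(e i)⁻¹ * d i| := by
      rw [Finset.sum_eq_single_of_mem i (Finset.mem_univ i)]
      · simp [Real.norm_eq_abs, abs_mul, abs_inv]
      · intro b _ hb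
        simp [Matrix.diagonal_apply_ne' _ hb]
    rw [hL, abs_mul]
    simp only [Matrix.diagonal_mul, Real.norm_eq_abs, abs_mul, ← Finset.mul_sum]
    rw [show (∑ x, |A i x|) = d i from rfl, abs_of_pos (hdpos i)]
  have hinv1 : (D⁻¹ * A)⁻¹ = A⁻¹ * D := by
    rw [Matrix.mul_inv_rev, Matrix.nonsing_inv_nonsing_inv D hDdet]
  have hinv2 : (E⁻¹ * A)⁻¹ = A⁻¹ * E := by
    rw [Matrix.mul_inv_rev, Matrix.nonsing_inv_nonsing_inv E hEdet]
  have hfact : A⁻¹ * D = (E⁻¹ * A)⁻¹ * (E⁻¹ * D) := by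
    rw [hinv2, Matrix.mul_assoc, ← Matrix.mul_assoc E E⁻¹ D,
      Matrix.mul_nonsing_inv E hEdet, Matrix.one_mul]
  calc ‖D⁻¹ * A‖ * ‖(D⁻¹ * A)⁻¹‖ = ‖(E⁻¹ * A)⁻¹ * (E⁻¹ * D)‖ := by
        rw [hnorm1, one_mul, hinv1, hfact]
    _ ≤ ‖(E⁻¹ * A)⁻¹‖ * ‖E⁻¹ * D‖ := Matrix.linfty_opNorm_mul _ _
    _ = ‖E⁻¹ * A‖ * ‖(E⁻¹ * A)⁻¹‖ := by rw [hnorm2, mul_comm]
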